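/- arXiv:2002.04558 — 3 statements merged into one kernel-verified Lean document; each statement's English description precedes it below -/
import Mathlib

section
/- Let Γ ⊆ [N+1] be a finite set of parties, and define the entropy function S_Γ(K) = min(|K ∩ Γ|, |Γ| - |K ∩ Γ|) and the multipartite information I_I = ∑_{∅ ≠ K ⊆ I} (-1)^{1+|K|} S_Γ(K). If I ⊄ Γ (i.e., I contains an element not in Γ), then I_I = 0. -/
open Finset

/-- The terms for `K` and `insert x K` cancel. -/
theorem Finset.sum_powerset_neg_one_pow_card_mul_eq_zero {α R : Type*} [DecidableEq α] [Ring R]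
    {I : Finset α} {x : α} (hx : x ∈ I) (f : Finset α → R)
    (hf : ∀ K, x ∉ K → f (insert x K) = f K) :
    ∑ K ∈ I.powerset, (-1 : R) ^ K.card * f K = 0 := by
  rw [← insert_erase hx, sum_powerset_insert (notMem_erase x I), ← sum_add_distrib]
  refine sum_eq_zero fun K hK => ?_
  have hxK : x ∉ K := fun h => notMem_erase x I (mem_powerset.mp hK h)
  rw [card_insert_of_notMem hxK, hf K hxK, pow_succ, mul_neg_one, neg_mul, add_neg_cancel]

/-- The multipartite information of a perfect tensor on parties Γ vanishes whenever
the index set I is not contained in Γ. Here S_Γ(K) = min(|K ∩ Γ|, |Γ| - |K ∩ Γ|). -/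
theorem stmt4 {α : Type*} [DecidableEq α] (Γ I : Finset α) (h : ¬ I ⊆ Γ) :
    ∑ K ∈ I.powerset.filter (fun K => K.Nonempty),
      (-1 : ℝ) ^ (1 + K.card) *
        ((min ((K ∩ Γ).card) (Γ.card - (K ∩ Γ).card) : ℕ) : ℝ) = 0 := by
  obtain ⟨x, hxI, hxΓ⟩ := not_subset.mp h
  have hempty_term_zero (K : Finset α) (hK : ¬K.Nonempty) :
      (-1 : ℝ) ^ (1 + K.card) * ((min ((K ∩ Γ).card) (Γ.card - (K ∩ Γ).card) : ℕ) : ℝ) = 0 := by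
    simp [not_nonempty_iff_eq_empty.mp hK]
  rw [sum_filter_of_ne fun K _ hne => by_contra fun hK => hne (hempty_term_zero K hK)]
  simp_rw [pow_add, pow_one, neg_one_mul, neg_mul, sum_neg_distrib, neg_eq_zero]
  exact sum_powerset_neg_one_pow_card_mul_eq_zero hxI _ fun K _ => by
    rw [insert_inter_of_notMem hxΓ]
end

section
/- Let Γ be a finite set and define S_Γ(X) = min(|X ∩ Γ|, |Γ| - |X ∩ Γ|). Then for any three pairwise disjoint finite sets A, B, C: S_Γ(A∪B) + S_Γ(A∪C) + S_Γ(B∪C) ≥ S_Γ(A) + S_Γ(B) + S_Γ(C) + S_Γ(A∪B∪C). -/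
/-! Cardinalities of disjoint sets add inside `Γ`, so the inequality reduces to one about
`k ↦ min k (n - k)` at natural numbers `a, b, c` with `a + b + c ≤ n`; that one is a linear
case split on which side of `n / 2` each of the seven arguments lies. -/

open Finset

def minCut (n k : ℕ) : ℕ := min k (n - k)

theorem minCut_mmi {n a b c : ℕ} (h : a + b + c ≤ n) :
    minCut n a + minCut n b + minCut n c + minCut n (a + b + c) ≤
      minCut n (a + b) + minCut n (a + c) + minCut n (b + c) := by
  unfold minCut
  omega

theorem card_union_inter_of_disjoint {α : Type*} [DecidableEq α] {X Y : Finset α}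
    (Γ : Finset α) (h : Disjoint X Y) :
    ((X ∪ Y) ∩ Γ).card = (X ∩ Γ).card + (Y ∩ Γ).card := by
  rw [union_inter_distrib_right, card_union_of_disjoint (h.mono inter_subset_left inter_subset_left)]

/-- Monogamy of mutual information for the perfect-tensor entropy function
S_Γ(X) = min(|X ∩ Γ|, |Γ| - |X ∩ Γ|) on pairwise disjoint sets A, B, C. -/
theorem stmt8 {α : Type*} [DecidableEq α] (Γ A B C : Finset α)
    (hAB : Disjoint A B) (hAC : Disjoint A C) (hBC : Disjoint B C) :
    min (((A ∪ B) ∩ Γ).card) (Γ.card - ((A ∪ B) ∩ Γ).card)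
      + min (((A ∪ C) ∩ Γ).card) (Γ.card - ((A ∪ C) ∩ Γ).card)
      + min (((B ∪ C) ∩ Γ).card) (Γ.card - ((B ∪ C) ∩ Γ).card)
      ≥ min ((A ∩ Γ).card) (Γ.card - (A ∩ Γ).card)
        + min ((B ∩ Γ).card) (Γ.card - (B ∩ Γ).card)
        + min ((C ∩ Γ).card) (Γ.card - (C ∩ Γ).card)
        + min (((A ∪ B ∪ C) ∩ Γ).card) (Γ.card - ((A ∪ B ∪ C) ∩ Γ).card) := by
  have hABC : Disjoint (A ∪ B) C := disjoint_union_left.2 ⟨hAC, hBC⟩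
  have hle : ((A ∪ B ∪ C) ∩ Γ).card ≤ Γ.card := card_le_card inter_subset_right
  rw [card_union_inter_of_disjoint Γ hABC, card_union_inter_of_disjoint Γ hAB] at hle ⊢
  rw [card_union_inter_of_disjoint Γ hAC, card_union_inter_of_disjoint Γ hBC]
  exact minCut_mmi hle
end

section
/- Let N ≥ 2 and suppose Q is an information quantity whose K-basis expansion is Q = ∑_Γ λ_Γ K_Γ with λ_Γ = 0 for every Γ of the form Γ = {i, j} (two-element subsets of [N+1]). Define the induced I-basis coefficients ν_I by evaluating Q on the perfect-tensor entropy vectors: ν_i = λ_{i,N+1} and ν_i + ν_j + 2ν_{ij} = λ_{ij} for all i, j ∈ [N]. Then ν_I = 0 for all I with |I| ≤ 2, i.e., Q is superbalanced. -/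
open Finset

theorem Finset.eq_singleton_or_eq_pair_of_card_le_two {α : Type*} [DecidableEq α] {s : Finset α}
    (hs : s.Nonempty) (hcard : #s ≤ 2) :
    (∃ a, s = {a}) ∨ ∃ a b, a ≠ b ∧ s = {a, b} := by
  obtain hone | htwo : #s = 1 ∨ #s = 2 := by have := hs.card_pos; omega
  · exact .inl (card_eq_one.mp hone)
  · exact .inr (card_eq_two.mp htwo)

theorem stmt16_general (N : ℕ) (lam ν : Finset ℕ → ℝ)
    (hlam : ∀ Γ ⊆ Finset.Icc 1 (N + 1), Γ.card = 2 → lam Γ = 0)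
    (h1 : ∀ i ∈ Finset.Icc 1 N, ν {i} = lam {i, N + 1})
    (h2 : ∀ i ∈ Finset.Icc 1 N, ∀ j ∈ Finset.Icc 1 N, i ≠ j →
      ν {i} + ν {j} + 2 * ν {i, j} = lam {i, j}) :
    ∀ I ⊆ Finset.Icc 1 N, I.Nonempty → I.card ≤ 2 → ν I = 0 := by
  have hsub : Icc 1 N ⊆ Icc 1 (N + 1) := Icc_subset_Icc_right N.le_succ
  have lam_pair : ∀ i ∈ Icc 1 (N + 1), ∀ j ∈ Icc 1 (N + 1), i ≠ j → lam {i, j} = 0 :=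
    fun i hi j hj hij => hlam _ (insert_subset hi (singleton_subset_iff.mpr hj)) (card_pair hij)
  have ν_singleton : ∀ i ∈ Icc 1 N, ν {i} = 0 := by
    intro i hi
    have hiN : i ≠ N + 1 := by simp only [mem_Icc] at hi; omega
    rw [h1 i hi, lam_pair i (hsub hi) (N + 1) (by simp) hiN]
  intro I hI hne hcard
  obtain ⟨i, rfl⟩ | ⟨i, j, hij, rfl⟩ := eq_singleton_or_eq_pair_of_card_le_two hne hcard
  · exact ν_singleton i (hI (mem_singleton_self i))
  · have hi : i ∈ Icc 1 N := hI (by simp)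
    have hj : j ∈ Icc 1 N := hI (by simp)
    have hpair := h2 i hi j hj hij
    rw [ν_singleton i hi, ν_singleton j hj, lam_pair i (hsub hi) j (hsub hj) hij] at hpair
    linarith

/-- If all rank-2 K-basis coefficients of an information quantity vanish, then all
I-basis coefficients of rank ≤ 2 vanish, i.e. the quantity is superbalanced. Here
[N] = Icc 1 N, the purifier is party N+1, and the induced I-basis coefficients ν satisfy
ν_i = λ_{i,N+1} and ν_i + ν_j + 2ν_{ij} = λ_{ij}. -/
theorem stmt16 (N : ℕ) (hN : 2 ≤ N) (lam ν : Finset ℕ → ℝ)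
    (hlam : ∀ Γ ⊆ Finset.Icc 1 (N + 1), Γ.card = 2 → lam Γ = 0)
    (h1 : ∀ i ∈ Finset.Icc 1 N, ν {i} = lam {i, N + 1})
    (h2 : ∀ i ∈ Finset.Icc 1 N, ∀ j ∈ Finset.Icc 1 N, i ≠ j →
      ν {i} + ν {j} + 2 * ν {i, j} = lam {i, j}) :
    ∀ I ⊆ Finset.Icc 1 N, I.Nonempty → I.card ≤ 2 → ν I = 0 :=
  stmt16_general N lam ν hlam h1 h2
end
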